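/- arXiv:1505.03173 — 2 statements merged into one kernel-verified Lean document; each statement's English description precedes it below -/
import Mathlib

section
/- Let X = [0,1]^d, (u^n)_{n≥0} a (t,d)-sequence in base b ≥ 2, and K : X → P(X) a Markov kernel satisfying Assumptions A1 and A2. Then there exist δ̄_K > 0, a map δ ↦ k_δ ∈ ℕ on (0, δ̄_K] with k_δ ≥ t + d, and a continuous strictly increasing function v_K : (0, δ̄_K] → (0,∞) with v_K(δ) → 0 as δ → 0 — all independent of the pair (x̃, x') ∈ X² — such that for every δ ∈ (0, δ̄_K], every (x̃, x') ∈ X², every a ∈ ℕ, and every choice of points x^n ∈ B_{v_K(δ)}(x̃) for a b^{k_δ} ≤ n < (a+1) b^{k_δ}, the point set {F_K^{-1}(x^n, u^n) : a b^{k_δ} ≤ n < (a+1) b^{k_δ}} contains at least b^t points in B_δ(x'). In particular, this holds when x^n = x̃ for all n. -/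
open MeasureTheory ProbabilityTheory Set Filter
open scoped Classical

/-- The closed unit cube `[0,1]^d` in `ℝ^d` (modeled as `Fin d → ℝ` with the sup norm). -/
def cube (d : ℕ) : Set (Fin d → ℝ) := {x | ∀ i, x i ∈ Set.Icc (0:ℝ) 1}

/-- Membership in the `b`-ary box `∏_j [c_j b^{-e_j}, (c_j+1) b^{-e_j})`. -/
def inBaryBox {d : ℕ} (b : ℕ) (e c : Fin d → ℕ) (x : Fin d → ℝ) : Prop :=
  ∀ j, (c j : ℝ) / (b : ℝ) ^ (e j) ≤ x j ∧ x j < ((c j : ℝ) + 1) / (b : ℝ) ^ (e j)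

/-- The block `{u^n : A ≤ n < A + b^m}` is a `(t,m,d)`-net in base `b`: every `b`-ary box of
volume `b^{t-m}` contains exactly `b^t` points of the block. -/
def IsNetBlock {d : ℕ} (b t m : ℕ) (u : ℕ → Fin d → ℝ) (A : ℕ) : Prop :=
  ∀ e c : Fin d → ℕ, (∀ j, c j < b ^ (e j)) → (∑ j, e j) = m - t →
    ((Finset.Ico A (A + b ^ m)).filter (fun n => inBaryBox b e c (u n))).card = b ^ t

/-- `(u^n)_{n≥0}` is a `(t,d)`-sequence in base `b`. -/
def IsTSeq {d : ℕ} (b t : ℕ) (u : ℕ → Fin d → ℝ) : Prop :=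
  (∀ n i, u n i ∈ Set.Ico (0:ℝ) 1) ∧
  ∀ a m : ℕ, t ≤ m → IsNetBlock b t m u (a * b ^ m)

/-- `(v^n)_{n≥0}` is a scalar `(t,1)`-sequence in base `b`. -/
def IsTSeq1 (b t : ℕ) (v : ℕ → ℝ) : Prop :=
  (∀ n, v n ∈ Set.Ico (0:ℝ) 1) ∧
  ∀ a m : ℕ, t ≤ m → ∀ c : ℕ, c < b ^ (m - t) →
    ((Finset.Ico (a * b ^ m) (a * b ^ m + b ^ m)).filter
      (fun n => (c : ℝ) / (b:ℝ) ^ (m - t) ≤ v n ∧ v n < ((c : ℝ) + 1) / (b:ℝ) ^ (m - t))).card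
      = b ^ t

/-- `k_n`: the smallest integer `k` such that `n < b^k`. -/
noncomputable def kOf (b n : ℕ) : ℕ := sInf {k | n < b ^ k}

section Rosenblatt

variable {d : ℕ}

/-- Marginal of the density `κ(·|x)` over the first `i` coordinates: the first `i` coordinates
are fixed to those of `y`, the remaining ones are integrated out over the unit cube. -/
noncomputable def marg (κ : (Fin d → ℝ) → (Fin d → ℝ) → ℝ) (i : ℕ) (x y : Fin d → ℝ) : ℝ :=
  ∫ z in cube d, κ x (fun j => if (j : ℕ) < i then y j else z j)

/-- `K_i(y_i | y_{1:i-1}, x)`: the `i`-th conditional density of the kernel density `κ`. -/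
noncomputable def condDensity (κ : (Fin d → ℝ) → (Fin d → ℝ) → ℝ) (i : Fin d)
    (x y : Fin d → ℝ) : ℝ :=
  marg κ ((i : ℕ) + 1) x y / marg κ (i : ℕ) x y

/-- `F_{K_i}(s | x, y_{1:i-1})`: the `i`-th conditional CDF of the kernel density `κ`. -/
noncomputable def condCDF' (κ : (Fin d → ℝ) → (Fin d → ℝ) → ℝ) (i : Fin d)
    (x y : Fin d → ℝ) (s : ℝ) : ℝ :=
  ∫ r in (0:ℝ)..s, condDensity κ i x (Function.update y i r)

/-- The Rosenblatt transform `F_K(x,·)` of the kernel with density `κ`. -/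
noncomputable def Ros (κ : (Fin d → ℝ) → (Fin d → ℝ) → ℝ) (x y : Fin d → ℝ) : Fin d → ℝ :=
  fun i => condCDF' κ i x y (y i)

/-- Assumption (A1): each conditional CDF is strictly increasing in its main argument. -/
def A1 (κ : (Fin d → ℝ) → (Fin d → ℝ) → ℝ) : Prop :=
  ∀ x ∈ cube d, ∀ y ∈ cube d, ∀ i : Fin d,
    StrictMonoOn (fun s => condCDF' κ i x y s) (Set.Icc (0:ℝ) 1)

/-- Assumption (A2): the density `κ` is continuous on `X²` and bounded below by `Klow > 0`. -/
def A2 (κ : (Fin d → ℝ) → (Fin d → ℝ) → ℝ) (Klow : ℝ) : Prop :=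
  ContinuousOn (fun p : (Fin d → ℝ) × (Fin d → ℝ) => κ p.1 p.2) ((cube d) ×ˢ (cube d)) ∧
  0 < Klow ∧ ∀ x ∈ cube d, ∀ y ∈ cube d, Klow ≤ κ x y

/-- `κ` is a probability density in its second argument, w.r.t. Lebesgue measure on the cube. -/
def IsMarkovDensity (κ : (Fin d → ℝ) → (Fin d → ℝ) → ℝ) : Prop :=
  ∀ x ∈ cube d, (∀ y ∈ cube d, 0 ≤ κ x y) ∧ ∫ y in cube d, κ x y = 1

/-- `G` is the inverse Rosenblatt transform associated with `κ`. -/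
def IsInvRos (κ : (Fin d → ℝ) → (Fin d → ℝ) → ℝ)
    (G : (Fin d → ℝ) → (Fin d → ℝ) → (Fin d → ℝ)) : Prop :=
  ∀ x ∈ cube d, ∀ u : Fin d → ℝ, (∀ i, u i ∈ Set.Icc (0:ℝ) 1) →
    G x u ∈ cube d ∧ Ros κ x (G x u) = u

/-- The sup-norm ball `B_δ(x)` of radius `δ` around `x`, intersected with the cube. -/
def ball' {d : ℕ} (δ : ℝ) (x : Fin d → ℝ) : Set (Fin d → ℝ) :=
  {y ∈ cube d | ‖y - x‖ ≤ δ}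

end Rosenblatt

/-!
Under (A2) the density is continuous and takes values in `[m, M]` with `m > 0` on the compact
cube, so each conditional CDF `F_i(· | x, y_{1:i-1})` has slope at least `m / M` and depends
uniformly continuously on `(x, y_{1:i-1})`. Solving `F_K(x, y) = u` one coordinate at a time then
shows that the inverse Rosenblatt transform is equicontinuous: `F_K^{-1}(x, u)` is `δ`-close to
`x'` as soon as `x` is `η`-close to `x̃` and `u` is `η`-close to `F_K(x̃, x')`, with `η`
independent of `x̃, x'`. A block of `b^(t + d e)` consecutive points of the `(t,d)`-sequence puts
`b^t` points in the `b`-ary box of side `b^(-e) ≤ η` containing `F_K(x̃, x')`. Finally the radii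
found for `δ = 1/(n+1)` are smoothed into `v_K`, the primitive of a positive monotone step
function.
-/

section Cube

variable {d : ℕ}

lemma cube_eq_Icc : cube d = Icc 0 1 := by
  ext; simp [cube, Pi.le_def, forall_and]

lemma isCompact_cube : IsCompact (cube d) := cube_eq_Icc ▸ isCompact_Icc

lemma measurableSet_cube : MeasurableSet (cube d) := cube_eq_Icc ▸ measurableSet_Icc

lemma volume_cube : volume (cube d) = 1 := by
  simp [cube_eq_Icc, Real.volume_Icc_pi]

lemma setIntegral_cube_const (c : ℝ) : ∫ _ in cube d, c = c := by
  simp [measureReal_def, volume_cube]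

lemma zero_mem_cube : (0 : Fin d → ℝ) ∈ cube d := fun _ => ⟨le_rfl, zero_le_one⟩

lemma update_mem_cube {y : Fin d → ℝ} (hy : y ∈ cube d) (i : Fin d) {r : ℝ}
    (hr : r ∈ Icc (0 : ℝ) 1) : Function.update y i r ∈ cube d := by
  intro j
  rcases eq_or_ne j i with rfl | h
  · simpa using hr
  · simpa [Function.update_of_ne h] using hy j

lemma dist_update_le (i : Fin d) (y y' : Fin d → ℝ) (r r' : ℝ) :
    dist (Function.update y i r) (Function.update y' i r') ≤ max (dist y y') (dist r r') := by
  refine (dist_pi_le_iff (le_max_of_le_left dist_nonneg)).2 fun j => ?_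
  rcases eq_or_ne j i with rfl | h
  · simp
  · simpa [Function.update_of_ne h] using le_max_of_le_left (dist_le_pi_dist y y' j)

lemma insertNth_mem_cube {n : ℕ} (i : Fin (n + 1)) {r : ℝ} {w : Fin n → ℝ}
    (hr : r ∈ Icc (0 : ℝ) 1) (hw : w ∈ cube n) : i.insertNth r w ∈ cube (n + 1) := by
  intro k
  induction k using i.succAboveCases <;> simp [hr, hw _]

lemma setIntegral_cube_succ {n : ℕ} (i : Fin (n + 1)) {f : (Fin (n + 1) → ℝ) → ℝ}
    (hf : ContinuousOn f (cube (n + 1))) :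
    ∫ z in cube (n + 1), f z = ∫ r in Icc (0 : ℝ) 1, ∫ w in cube n, f (i.insertNth r w) := by
  set e : ℝ × (Fin n → ℝ) ≃ᵐ (Fin (n + 1) → ℝ) :=
    (MeasurableEquiv.piFinSuccAbove (fun _ => ℝ) i).symm
  have he : MeasurePreserving e := (volume_preserving_piFinSuccAbove (fun _ => ℝ) i).symm _
  have hpre : e ⁻¹' cube (n + 1) = Icc (0 : ℝ) 1 ×ˢ cube n := by
    simp only [cube_eq_Icc]
    exact ((Fin.insertNthOrderIso (fun _ => ℝ) i).preimage_Icc _ _).trans (Icc_prod_eq _ _)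
  have hint : IntegrableOn (fun p : ℝ × (Fin n → ℝ) => f (i.insertNth p.1 p.2))
      (Icc (0 : ℝ) 1 ×ˢ cube n) (volume.prod volume) := by
    rw [← Measure.volume_eq_prod]
    refine ContinuousOn.integrableOn_compact (isCompact_Icc.prod isCompact_cube) ?_
    exact hf.comp (by fun_prop) fun p hp => insertNth_mem_cube i hp.1 hp.2
  rw [← he.map_eq, setIntegral_map_equiv, hpre, Measure.volume_eq_prod]
  exact setIntegral_prod _ hint

end Cube

section Splice

variable {d : ℕ}

def splice (i : ℕ) (y z : Fin d → ℝ) : Fin d → ℝ := fun j => if (j : ℕ) < i then y j else z j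

lemma splice_mem_cube {i : ℕ} {y z : Fin d → ℝ} (hy : y ∈ cube d) (hz : z ∈ cube d) :
    splice i y z ∈ cube d := by
  intro j; unfold splice; split_ifs <;> simp [hy j, hz j]

lemma continuous_splice (i : ℕ) (y : Fin d → ℝ) : Continuous (splice i y) :=
  continuous_pi fun j => by unfold splice; split_ifs <;> fun_prop

lemma dist_splice_le {i : ℕ} {y y' : Fin d → ℝ} (z : Fin d → ℝ) {η : ℝ} (hη : 0 ≤ η)
    (h : ∀ j : Fin d, (j : ℕ) < i → dist (y j) (y' j) ≤ η) :
    dist (splice i y z) (splice i y' z) ≤ η := by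
  refine (dist_pi_le_iff hη).2 fun j => ?_
  unfold splice; split_ifs with hj
  exacts [h j hj, by simpa using hη]

lemma splice_congr {i : ℕ} {y y' : Fin d → ℝ} (z : Fin d → ℝ)
    (h : ∀ j : Fin d, (j : ℕ) < i → y j = y' j) : splice i y z = splice i y' z := by
  funext j; unfold splice; split_ifs with hj <;> simp [h j, hj]

lemma splice_self (i : ℕ) (y : Fin d → ℝ) : splice i y y = y := by
  funext j; unfold splice; split_ifs <;> rfl

lemma splice_succ_update (i : Fin d) (y z : Fin d → ℝ) (r : ℝ) :
    splice ((i : ℕ) + 1) (Function.update y i r) z = splice i y (Function.update z i r) := by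
  funext j
  rcases lt_trichotomy (j : ℕ) i with h | h | h
  · have hj : j ≠ i := Fin.ne_of_lt h
    simp [splice, h, Nat.lt_succ_of_lt h, Function.update_of_ne hj]
  · obtain rfl := Fin.ext h
    simp [splice]
  · have hj : j ≠ i := (Fin.ne_of_lt h).symm
    simp [splice, h.not_gt, Nat.not_lt.2 h, Function.update_of_ne hj]

lemma marg_eq_setIntegral_splice (κ : (Fin d → ℝ) → (Fin d → ℝ) → ℝ) (i : ℕ) (x y : Fin d → ℝ) :
    marg κ i x y = ∫ z in cube d, κ x (splice i y z) := rfl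

lemma marg_congr (κ : (Fin d → ℝ) → (Fin d → ℝ) → ℝ) {i : ℕ} (x : Fin d → ℝ) {y y' : Fin d → ℝ}
    (h : ∀ j : Fin d, (j : ℕ) < i → y j = y' j) : marg κ i x y = marg κ i x y' := by
  simp only [marg_eq_setIntegral_splice, splice_congr _ h]

lemma condDensity_update_congr (κ : (Fin d → ℝ) → (Fin d → ℝ) → ℝ) (i : Fin d)
    (x : Fin d → ℝ) {y y' : Fin d → ℝ} (h : ∀ j : Fin d, (j : ℕ) < i → y j = y' j) (r : ℝ) :
    condDensity κ i x (Function.update y i r) = condDensity κ i x (Function.update y' i r) := by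
  have hupd : ∀ j : Fin d, (j : ℕ) < (i : ℕ) + 1 →
      Function.update y i r j = Function.update y' i r j := fun j hj => by
    rcases eq_or_ne j i with rfl | hne
    · simp
    · simp only [Function.update_of_ne hne]
      exact h j (lt_of_le_of_ne (Nat.lt_succ_iff.1 hj) fun he => hne (Fin.ext he))
  unfold condDensity
  rw [marg_congr κ x hupd, marg_congr κ x fun j hj => hupd j (Nat.lt_succ_of_lt hj)]

lemma condCDF'_congr (κ : (Fin d → ℝ) → (Fin d → ℝ) → ℝ) (i : Fin d)
    (x : Fin d → ℝ) {y y' : Fin d → ℝ} (h : ∀ j : Fin d, (j : ℕ) < i → y j = y' j) (s : ℝ) :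
    condCDF' κ i x y s = condCDF' κ i x y' s :=
  intervalIntegral.integral_congr fun r _ => condDensity_update_congr κ i x h r

lemma condCDF'_zero (κ : (Fin d → ℝ) → (Fin d → ℝ) → ℝ) (i : Fin d) (x y : Fin d → ℝ) :
    condCDF' κ i x y 0 = 0 :=
  intervalIntegral.integral_same

end Splice

lemma abs_div_sub_div_le {a b a' b' m M ε : ℝ} (hm : 0 < m) (hb : m ≤ b) (hb' : m ≤ b')
    (ha' : 0 ≤ a') (ha'M : a' ≤ M) (ha : |a - a'| ≤ ε) (hbε : |b - b'| ≤ ε) :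
    |a / b - a' / b'| ≤ (1 / m + M / m ^ 2) * ε := by
  have hb0 : 0 < b := hm.trans_le hb
  have hb0' : 0 < b' := hm.trans_le hb'
  have hε : 0 ≤ ε := (abs_nonneg _).trans ha
  have hM : 0 ≤ M := ha'.trans ha'M
  have hsplit : a / b - a' / b' = (a - a') / b + a' * (b' - b) / (b * b') := by
    field_simp; ring
  calc |a / b - a' / b'| ≤ |a - a'| / b + a' * |b' - b| / (b * b') := by
        rw [hsplit]
        refine (abs_add_le _ _).trans_eq ?_
        rw [abs_div, abs_div, abs_mul, abs_of_pos hb0, abs_of_pos (mul_pos hb0 hb0'),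
          abs_of_nonneg ha']
    _ ≤ ε / m + M * ε / (m * m) := by
        rw [abs_sub_comm] at hbε
        gcongr
    _ = (1 / m + M / m ^ 2) * ε := by ring

structure DensityBounds {d : ℕ} (κ : (Fin d → ℝ) → (Fin d → ℝ) → ℝ) (m M : ℝ) : Prop where
  continuousOn : ContinuousOn (fun p : (Fin d → ℝ) × (Fin d → ℝ) => κ p.1 p.2) (cube d ×ˢ cube d)
  lower_pos : 0 < m
  le_density : ∀ x ∈ cube d, ∀ y ∈ cube d, m ≤ κ x y
  density_le : ∀ x ∈ cube d, ∀ y ∈ cube d, κ x y ≤ M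

lemma A2.exists_densityBounds {d : ℕ} {κ : (Fin d → ℝ) → (Fin d → ℝ) → ℝ} {m : ℝ}
    (h : A2 κ m) : ∃ M, DensityBounds κ m M := by
  obtain ⟨hcont, hm, hle⟩ := h
  obtain ⟨M, hM⟩ := (isCompact_cube.prod isCompact_cube).exists_bound_of_continuousOn hcont
  exact ⟨M, hcont, hm, hle, fun x hx y hy => (le_abs_self _).trans (hM (x, y) ⟨hx, hy⟩)⟩

namespace DensityBounds

variable {d : ℕ} {κ : (Fin d → ℝ) → (Fin d → ℝ) → ℝ} {m M : ℝ}

lemma upper_pos (hκ : DensityBounds κ m M) : 0 < M :=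
  hκ.lower_pos.trans_le <| (hκ.le_density 0 zero_mem_cube 0 zero_mem_cube).trans
    (hκ.density_le 0 zero_mem_cube 0 zero_mem_cube)

lemma exists_abs_sub_le (hκ : DensityBounds κ m M) {ε : ℝ} (hε : 0 < ε) :
    ∃ η > 0, ∀ p ∈ cube d ×ˢ cube d, ∀ q ∈ cube d ×ˢ cube d,
      dist p q ≤ η → |κ p.1 p.2 - κ q.1 q.2| ≤ ε := by
  have := (isCompact_cube.prod isCompact_cube).uniformContinuousOn_of_continuous hκ.continuousOn
  obtain ⟨η, hη, h⟩ := Metric.uniformContinuousOn_iff_le.1 this ε hε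
  exact ⟨η, hη, fun p hp q hq hpq => by simpa only [Real.dist_eq] using h p hp q hq hpq⟩

lemma integrableOn_splice (hκ : DensityBounds κ m M) (i : ℕ) {x y : Fin d → ℝ}
    (hx : x ∈ cube d) (hy : y ∈ cube d) :
    IntegrableOn (fun z => κ x (splice i y z)) (cube d) := by
  refine ContinuousOn.integrableOn_compact isCompact_cube ?_
  exact hκ.continuousOn.comp (continuous_const.prodMk (continuous_splice i y)).continuousOn
    fun z hz => ⟨hx, splice_mem_cube hy hz⟩

lemma le_marg (hκ : DensityBounds κ m M) (i : ℕ) {x y : Fin d → ℝ}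
    (hx : x ∈ cube d) (hy : y ∈ cube d) : m ≤ marg κ i x y := by
  rw [← setIntegral_cube_const (d := d) m]
  exact setIntegral_mono_on (integrableOn_const (by simp [volume_cube]))
    (hκ.integrableOn_splice i hx hy) measurableSet_cube
    fun z hz => hκ.le_density x hx _ (splice_mem_cube hy hz)

lemma marg_le (hκ : DensityBounds κ m M) (i : ℕ) {x y : Fin d → ℝ}
    (hx : x ∈ cube d) (hy : y ∈ cube d) : marg κ i x y ≤ M := by
  rw [← setIntegral_cube_const (d := d) M]
  exact setIntegral_mono_on (hκ.integrableOn_splice i hx hy)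
    (integrableOn_const (by simp [volume_cube])) measurableSet_cube
    fun z hz => hκ.density_le x hx _ (splice_mem_cube hy hz)

lemma abs_marg_sub_le (hκ : DensityBounds κ m M) {ε η : ℝ}
    (hκη : ∀ p ∈ cube d ×ˢ cube d, ∀ q ∈ cube d ×ˢ cube d,
      dist p q ≤ η → |κ p.1 p.2 - κ q.1 q.2| ≤ ε)
    (i : ℕ) {x y x' y' : Fin d → ℝ} (hx : x ∈ cube d) (hy : y ∈ cube d)
    (hx' : x' ∈ cube d) (hy' : y' ∈ cube d) (hdx : dist x x' ≤ η) (hdy : dist y y' ≤ η) :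
    |marg κ i x y - marg κ i x' y'| ≤ ε := by
  have hη : 0 ≤ η := dist_nonneg.trans hdx
  have hpt : ∀ z ∈ cube d, ‖κ x (splice i y z) - κ x' (splice i y' z)‖ ≤ ε := fun z hz =>
    hκη (x, _) ⟨hx, splice_mem_cube hy hz⟩ (x', _) ⟨hx', splice_mem_cube hy' hz⟩ <| by
      rw [Prod.dist_eq]
      exact max_le hdx (dist_splice_le z hη fun j _ => (dist_le_pi_dist y y' j).trans hdy)
  have := MeasureTheory.norm_setIntegral_le_of_norm_le_const (μ := volume)
    (by simp [volume_cube]) hpt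
  rwa [integral_sub (hκ.integrableOn_splice i hx hy) (hκ.integrableOn_splice i hx' hy'),
    measureReal_def, volume_cube, ENNReal.toReal_one, mul_one, Real.norm_eq_abs] at this

lemma setIntegral_marg_succ_update (hκ : DensityBounds κ m M) (i : Fin d) {x y : Fin d → ℝ}
    (hx : x ∈ cube d) (hy : y ∈ cube d) :
    ∫ r in Icc (0 : ℝ) 1, marg κ ((i : ℕ) + 1) x (Function.update y i r) = marg κ i x y := by
  obtain ⟨n, rfl⟩ : ∃ n, d = n + 1 := Nat.exists_eq_succ_of_ne_zero i.pos.ne'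
  set f : (Fin (n + 1) → ℝ) → ℝ := fun z => κ x (splice i y z)
  have hf : ContinuousOn f (cube (n + 1)) :=
    hκ.continuousOn.comp (continuous_const.prodMk (continuous_splice i y)).continuousOn
      fun z hz => ⟨hx, splice_mem_cube hy hz⟩
  have hslice : ∀ r ∈ Icc (0 : ℝ) 1, marg κ ((i : ℕ) + 1) x (Function.update y i r) =
      ∫ w in cube n, f (i.insertNth r w) := by
    intro r hr
    have hz : ∀ z, κ x (splice ((i : ℕ) + 1) (Function.update y i r) z) =
        f (i.insertNth r (i.removeNth z)) := by
      simp [f, splice_succ_update]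
    simp only [marg_eq_setIntegral_splice, hz]
    rw [setIntegral_cube_succ i (f := fun z => f (i.insertNth r (i.removeNth z)))]
    · simp only [Fin.removeNth_insertNth, setIntegral_const, Real.volume_real_Icc]
      norm_num
    · exact hf.comp (continuous_const.finInsertNth i
        (continuous_pi fun j => continuous_apply (i.succAbove j))).continuousOn fun z hz =>
        insertNth_mem_cube i hr fun j => hz (i.succAbove j)
  rw [marg_eq_setIntegral_splice, setIntegral_cube_succ i hf]
  exact setIntegral_congr_fun measurableSet_Icc hslice

lemma div_le_condDensity (hκ : DensityBounds κ m M) (i : Fin d) {x y : Fin d → ℝ}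
    (hx : x ∈ cube d) (hy : y ∈ cube d) : m / M ≤ condDensity κ i x y :=
  div_le_div₀ (hκ.lower_pos.le.trans (hκ.le_marg _ hx hy)) (hκ.le_marg _ hx hy)
    (hκ.lower_pos.trans_le (hκ.le_marg _ hx hy)) (hκ.marg_le _ hx hy)

lemma exists_abs_condDensity_sub_le (hκ : DensityBounds κ m M) {ε : ℝ} (hε : 0 < ε) :
    ∃ η > 0, ∀ (i : Fin d), ∀ x ∈ cube d, ∀ y ∈ cube d, ∀ x' ∈ cube d, ∀ y' ∈ cube d,
      dist x x' ≤ η → dist y y' ≤ η → |condDensity κ i x y - condDensity κ i x' y'| ≤ ε := by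
  have hC : 0 < 1 / m + M / m ^ 2 := by have := hκ.lower_pos; have := hκ.upper_pos; positivity
  obtain ⟨η, hη, hκη⟩ := hκ.exists_abs_sub_le (div_pos hε hC)
  refine ⟨η, hη, fun i x hx y hy x' hx' y' hy' hdx hdy => ?_⟩
  have hmarg := fun k => hκ.abs_marg_sub_le hκη k hx hy hx' hy' hdx hdy
  calc _ ≤ (1 / m + M / m ^ 2) * (ε / (1 / m + M / m ^ 2)) :=
        abs_div_sub_div_le hκ.lower_pos (hκ.le_marg _ hx hy) (hκ.le_marg _ hx' hy')
          (hκ.lower_pos.le.trans (hκ.le_marg _ hx' hy')) (hκ.marg_le _ hx' hy') (hmarg _) (hmarg _)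
    _ = ε := mul_div_cancel₀ ε hC.ne'

lemma continuousOn_condDensity_update (hκ : DensityBounds κ m M) (i : Fin d) {x y : Fin d → ℝ}
    (hx : x ∈ cube d) (hy : y ∈ cube d) :
    ContinuousOn (fun r => condDensity κ i x (Function.update y i r)) (Icc 0 1) := by
  refine Metric.continuousOn_iff.2 fun r hr ε hε => ?_
  obtain ⟨η, hη, hcd⟩ := hκ.exists_abs_condDensity_sub_le (half_pos hε)
  refine ⟨η, hη, fun r' hr' hrr' => ?_⟩
  have hd := (dist_update_le i y y r' r).trans (by simpa using hrr'.le)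
  exact (hcd i x hx _ (update_mem_cube hy i hr') x hx _ (update_mem_cube hy i hr)
    (by simpa using hη.le) hd).trans_lt (half_lt_self hε)

lemma intervalIntegrable_condDensity_update (hκ : DensityBounds κ m M) (i : Fin d)
    {x y : Fin d → ℝ} (hx : x ∈ cube d) (hy : y ∈ cube d) {s s' : ℝ}
    (hs : s ∈ Icc (0 : ℝ) 1) (hs' : s' ∈ Icc (0 : ℝ) 1) :
    IntervalIntegrable (fun r => condDensity κ i x (Function.update y i r)) volume s s' :=
  ((hκ.continuousOn_condDensity_update i hx hy).mono (uIcc_subset_Icc hs hs')).intervalIntegrable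

lemma condCDF'_sub_condCDF' (hκ : DensityBounds κ m M) (i : Fin d) {x y : Fin d → ℝ}
    (hx : x ∈ cube d) (hy : y ∈ cube d) {s s' : ℝ} (hs : s ∈ Icc (0 : ℝ) 1)
    (hs' : s' ∈ Icc (0 : ℝ) 1) :
    condCDF' κ i x y s' - condCDF' κ i x y s =
      ∫ r in s..s', condDensity κ i x (Function.update y i r) :=
  intervalIntegral.integral_interval_sub_left
    (hκ.intervalIntegrable_condDensity_update i hx hy (left_mem_Icc.2 zero_le_one) hs')
    (hκ.intervalIntegrable_condDensity_update i hx hy (left_mem_Icc.2 zero_le_one) hs)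

lemma mul_sub_le_condCDF'_sub (hκ : DensityBounds κ m M) (i : Fin d) {x y : Fin d → ℝ}
    (hx : x ∈ cube d) (hy : y ∈ cube d) {s s' : ℝ} (hs : 0 ≤ s) (hss' : s ≤ s') (hs' : s' ≤ 1) :
    m / M * (s' - s) ≤ condCDF' κ i x y s' - condCDF' κ i x y s := by
  rw [hκ.condCDF'_sub_condCDF' i hx hy ⟨hs, hss'.trans hs'⟩ ⟨hs.trans hss', hs'⟩]
  have := intervalIntegral.integral_mono_on hss' intervalIntegrable_const
    (hκ.intervalIntegrable_condDensity_update i hx hy ⟨hs, hss'.trans hs'⟩ ⟨hs.trans hss', hs'⟩)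
    fun r hr => hκ.div_le_condDensity i hx
      (update_mem_cube hy i ⟨hs.trans hr.1, hr.2.trans hs'⟩)
  rwa [intervalIntegral.integral_const, smul_eq_mul, mul_comm] at this

lemma mul_abs_sub_le_abs_condCDF'_sub (hκ : DensityBounds κ m M) (i : Fin d)
    {x y : Fin d → ℝ} (hx : x ∈ cube d) (hy : y ∈ cube d) {s s' : ℝ}
    (hs : s ∈ Icc (0 : ℝ) 1) (hs' : s' ∈ Icc (0 : ℝ) 1) :
    m / M * |s' - s| ≤ |condCDF' κ i x y s' - condCDF' κ i x y s| := by
  have hc : 0 ≤ m / M := (div_pos hκ.lower_pos hκ.upper_pos).le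
  rcases le_total s s' with h | h
  · have := hκ.mul_sub_le_condCDF'_sub i hx hy hs.1 h hs'.2
    rw [abs_of_nonneg (sub_nonneg.2 h), abs_of_nonneg ((mul_nonneg hc (sub_nonneg.2 h)).trans this)]
    exact this
  · have := hκ.mul_sub_le_condCDF'_sub i hx hy hs'.1 h hs.2
    rw [abs_sub_comm, abs_of_nonneg (sub_nonneg.2 h), abs_sub_comm,
      abs_of_nonneg ((mul_nonneg hc (sub_nonneg.2 h)).trans this)]
    exact this

lemma condCDF'_one (hκ : DensityBounds κ m M) (i : Fin d) {x y : Fin d → ℝ}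
    (hx : x ∈ cube d) (hy : y ∈ cube d) : condCDF' κ i x y 1 = 1 := by
  have hden : ∀ r, marg κ i x (Function.update y i r) = marg κ i x y := fun r =>
    marg_congr κ x fun j hj => Function.update_of_ne (Fin.ne_of_lt hj) _ _
  simp only [condCDF', condDensity, hden, intervalIntegral.integral_of_le zero_le_one,
    ← integral_Icc_eq_integral_Ioc, integral_div, hκ.setIntegral_marg_succ_update i hx hy]
  exact div_self (hκ.lower_pos.trans_le (hκ.le_marg _ hx hy)).ne'

lemma Ros_mem_cube (hκ : DensityBounds κ m M) {x y : Fin d → ℝ} (hx : x ∈ cube d)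
    (hy : y ∈ cube d) : Ros κ x y ∈ cube d := by
  intro i
  have hc : 0 ≤ m / M := (div_pos hκ.lower_pos hκ.upper_pos).le
  have h0 := hκ.mul_sub_le_condCDF'_sub i hx hy le_rfl (hy i).1 (hy i).2
  have h1 := hκ.mul_sub_le_condCDF'_sub i hx hy (hy i).1 (hy i).2 le_rfl
  rw [condCDF'_zero] at h0
  rw [hκ.condCDF'_one i hx hy] at h1
  have := mul_nonneg hc (hy i).1
  have := mul_nonneg hc (sub_nonneg.2 (hy i).2)
  exact ⟨by simp only [Ros]; linarith, by simp only [Ros]; linarith⟩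

lemma exists_abs_condCDF'_sub_le (hκ : DensityBounds κ m M) {ε : ℝ} (hε : 0 < ε) :
    ∃ η > 0, ∀ (i : Fin d), ∀ x ∈ cube d, ∀ y ∈ cube d, ∀ x' ∈ cube d, ∀ y' ∈ cube d,
      ∀ s ∈ Icc (0 : ℝ) 1, dist x x' ≤ η → dist y y' ≤ η →
        |condCDF' κ i x y s - condCDF' κ i x' y' s| ≤ ε := by
  obtain ⟨η, hη, hcd⟩ := hκ.exists_abs_condDensity_sub_le hε
  refine ⟨η, hη, fun i x hx y hy x' hx' y' hy' s hs hdx hdy => ?_⟩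
  have hbound : ∀ r ∈ uIoc (0 : ℝ) s, ‖condDensity κ i x (Function.update y i r) -
      condDensity κ i x' (Function.update y' i r)‖ ≤ ε := by
    intro r hr
    rw [uIoc_of_le hs.1] at hr
    have hr : r ∈ Icc (0 : ℝ) 1 := ⟨hr.1.le, hr.2.trans hs.2⟩
    exact hcd i x hx _ (update_mem_cube hy i hr) x' hx' _ (update_mem_cube hy' i hr) hdx
      ((dist_update_le i y y' r r).trans (by simpa using hdy))
  have := intervalIntegral.norm_integral_le_of_norm_le_const hbound
  rw [intervalIntegral.integral_sub
    (hκ.intervalIntegrable_condDensity_update i hx hy (left_mem_Icc.2 zero_le_one) hs)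
    (hκ.intervalIntegrable_condDensity_update i hx' hy' (left_mem_Icc.2 zero_le_one) hs),
    sub_zero, abs_of_nonneg hs.1, Real.norm_eq_abs] at this
  exact this.trans (mul_le_of_le_one_right hε.le hs.2)

/-- Stability of one step of the inverse Rosenblatt recursion. -/
lemma exists_dist_le_of_condCDF'_near (hκ : DensityBounds κ m M) {σ : ℝ} (hσ : 0 < σ) :
    ∃ η > 0, ∀ (i : Fin d), ∀ x ∈ cube d, ∀ xt ∈ cube d, ∀ y ∈ cube d, ∀ x' ∈ cube d,
      dist x xt ≤ η → (∀ j : Fin d, (j : ℕ) < i → dist (y j) (x' j) ≤ η) →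
      |condCDF' κ i x y (y i) - condCDF' κ i xt x' (x' i)| ≤ η → dist (y i) (x' i) ≤ σ := by
  have hc : 0 < m / M := div_pos hκ.lower_pos hκ.upper_pos
  set ε := m / M * σ / 2
  obtain ⟨η₀, hη₀, hcdf⟩ := hκ.exists_abs_condCDF'_sub_le (by positivity : 0 < ε)
  refine ⟨min η₀ ε, lt_min hη₀ (by positivity),
    fun i x hx xt hxt y hy x' hx' hdx hprev hF => ?_⟩
  set w := splice i y x'
  have hw : w ∈ cube d := splice_mem_cube hy hx'
  have hFw : condCDF' κ i x y (y i) = condCDF' κ i x w (y i) :=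
    condCDF'_congr κ i x (fun j hj => by simp [w, splice, hj]) _
  have hdw : dist w x' ≤ η₀ := by
    rw [← splice_self i x']
    exact dist_splice_le x' hη₀.le fun j hj => (hprev j hj).trans (min_le_left _ _)
  have hshift := hcdf i x hx w hw xt hxt x' hx' (x' i) (hx' i)
    (hdx.trans (min_le_left _ _)) hdw
  have hlow := hκ.mul_abs_sub_le_abs_condCDF'_sub i hx hw (hx' i) (hy i)
  have hsum : |condCDF' κ i x w (y i) - condCDF' κ i x w (x' i)| ≤ m / M * σ := by
    rw [← hFw]
    calc _ ≤ |condCDF' κ i x y (y i) - condCDF' κ i xt x' (x' i)| +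
          |condCDF' κ i xt x' (x' i) - condCDF' κ i x w (x' i)| := abs_sub_le _ _ _
      _ ≤ ε + ε := add_le_add (hF.trans (min_le_right _ _)) (by rwa [abs_sub_comm])
      _ = m / M * σ := by ring
  rw [Real.dist_eq]
  exact le_of_mul_le_mul_left (hlow.trans hsum) hc

lemma exists_dist_invRos_le (hκ : DensityBounds κ m M)
    {G : (Fin d → ℝ) → (Fin d → ℝ) → (Fin d → ℝ)} (hG : IsInvRos κ G) {δ : ℝ} (hδ : 0 < δ) :
    ∃ η > 0, ∀ xt ∈ cube d, ∀ x' ∈ cube d, ∀ x ∈ cube d, ∀ v : Fin d → ℝ,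
      (∀ i, v i ∈ Icc (0 : ℝ) 1) → dist x xt ≤ η → dist v (Ros κ xt x') ≤ η →
        dist (G x v) x' ≤ δ := by
  have key : ∀ k : ℕ, ∀ δ > 0, ∃ η > 0, ∀ xt ∈ cube d, ∀ x' ∈ cube d, ∀ x ∈ cube d,
      ∀ v : Fin d → ℝ, (∀ i, v i ∈ Icc (0 : ℝ) 1) → dist x xt ≤ η →
        dist v (Ros κ xt x') ≤ η → ∀ i : Fin d, (i : ℕ) < k → dist (G x v i) (x' i) ≤ δ := by
    intro k
    induction k with
    | zero =>
      exact fun _ _ => ⟨1, one_pos, fun _ _ _ _ _ _ _ _ _ _ _ hi => absurd hi (Nat.not_lt_zero _)⟩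
    | succ k ih =>
      intro δ hδ
      obtain ⟨η₁, hη₁, hstep⟩ := hκ.exists_dist_le_of_condCDF'_near hδ
      obtain ⟨η₀, hη₀, hprev⟩ := ih (min δ η₁) (lt_min hδ hη₁)
      refine ⟨min η₀ η₁, lt_min hη₀ hη₁, fun xt hxt x' hx' x hx v hv hdx hdv i hi => ?_⟩
      have hprev' := hprev xt hxt x' hx' x hx v hv (hdx.trans (min_le_left _ _))
        (hdv.trans (min_le_left _ _))
      rcases Nat.lt_succ_iff_lt_or_eq.1 hi with hi | hi
      · exact (hprev' i hi).trans (min_le_left _ _)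
      obtain ⟨hy, hros⟩ := hG x hx v hv
      refine hstep i x hx xt hxt _ hy x' hx' (hdx.trans (min_le_right _ _))
        (fun j hj => (hprev' j (hi ▸ hj)).trans (min_le_right _ _)) ?_
      rw [show condCDF' κ i x (G x v) (G x v i) = v i from congrFun hros i, ← Real.dist_eq]
      exact (dist_le_pi_dist v _ i).trans (hdv.trans (min_le_right _ _))
  obtain ⟨η, hη, h⟩ := key d δ hδ
  exact ⟨η, hη, fun xt hxt x' hx' x hx v hv hdx hdv =>
    (dist_pi_le_iff hδ.le).2 fun i => h xt hxt x' hx' x hx v hv hdx hdv i i.isLt⟩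

end DensityBounds

lemma exists_lt_mem_Icc_div {N : ℕ} (hN : 0 < N) {v : ℝ} (hv : v ∈ Icc (0 : ℝ) 1) :
    ∃ c < N, v ∈ Icc ((c : ℝ) / N) ((c + 1) / N) := by
  have hN' : (0 : ℝ) < N := by exact_mod_cast hN
  rcases hv.2.lt_or_eq with h1 | rfl
  · refine ⟨⌊v * N⌋₊, ?_, ?_, ?_⟩
    · exact (Nat.floor_lt (by nlinarith [hv.1])).2 (mul_lt_of_lt_one_left hN' h1)
    · rw [div_le_iff₀ hN']; exact Nat.floor_le (by nlinarith [hv.1])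
    · rw [le_div_iff₀ hN']; exact (Nat.lt_floor_add_one _).le
  · refine ⟨N - 1, Nat.sub_lt hN one_pos, ?_, ?_⟩
    · rw [div_le_one hN']; exact_mod_cast Nat.sub_le N 1
    · rw [le_div_iff₀ hN', Nat.cast_sub (show 1 ≤ N by omega)]; simp

lemma IsTSeq.le_card_filter_dist_le {d b t : ℕ} {u : ℕ → Fin d → ℝ} (hu : IsTSeq b t u)
    (hb : 0 < b) {v : Fin d → ℝ} (hv : v ∈ cube d) (e a : ℕ) :
    b ^ t ≤ ((Finset.Ico (a * b ^ (t + d * e)) (a * b ^ (t + d * e) + b ^ (t + d * e))).filter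
      fun n => dist (u n) v ≤ 1 / (b : ℝ) ^ e).card := by
  have hN : 0 < b ^ e := pow_pos hb e
  choose c hc hcv using fun j => exists_lt_mem_Icc_div hN (hv j)
  rw [← hu.2 a (t + d * e) (Nat.le_add_right t _) (fun _ => e) c hc (by simp)]
  refine Finset.card_le_card fun n hn => ?_
  simp only [Finset.mem_filter] at hn ⊢
  refine ⟨hn.1, (dist_pi_le_iff (by positivity)).2 fun j => ?_⟩
  obtain ⟨h1, h2⟩ := hn.2 j
  obtain ⟨h3, h4⟩ := hcv j
  push_cast at h3 h4
  rw [Real.dist_eq, abs_le]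
  have hwidth : ((c j : ℝ) + 1) / (b : ℝ) ^ e = c j / (b : ℝ) ^ e + 1 / (b : ℝ) ^ e := by ring
  constructor <;> linarith

def BlockHitsBall {d : ℕ} (b t : ℕ) (u : ℕ → Fin d → ℝ)
    (G : (Fin d → ℝ) → (Fin d → ℝ) → (Fin d → ℝ)) (δ : ℝ) (k : ℕ) (r : ℝ) : Prop :=
  ∀ xt ∈ cube d, ∀ x' ∈ cube d, ∀ a : ℕ, ∀ xs : ℕ → Fin d → ℝ,
    (∀ n ∈ Finset.Ico (a * b ^ k) (a * b ^ k + b ^ k), xs n ∈ ball' r xt) →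
    b ^ t ≤ ((Finset.Ico (a * b ^ k) (a * b ^ k + b ^ k)).filter
      (fun n => G (xs n) (u n) ∈ ball' δ x')).card

namespace BlockHitsBall

variable {d b t : ℕ} {u : ℕ → Fin d → ℝ} {G : (Fin d → ℝ) → (Fin d → ℝ) → (Fin d → ℝ)}

lemma mono_left {δ δ' : ℝ} {k : ℕ} {r : ℝ} (h : BlockHitsBall b t u G δ k r) (hδ : δ ≤ δ') :
    BlockHitsBall b t u G δ' k r := fun xt hxt x' hx' a xs hxs =>
  (h xt hxt x' hx' a xs hxs).trans <| Finset.card_le_card fun n hn => by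
    simp only [Finset.mem_filter] at hn ⊢
    exact ⟨hn.1, hn.2.1, hn.2.2.trans hδ⟩

lemma anti_right {δ : ℝ} {k : ℕ} {r r' : ℝ} (h : BlockHitsBall b t u G δ k r) (hr : r' ≤ r) :
    BlockHitsBall b t u G δ k r' := fun xt hxt x' hx' a xs hxs =>
  h xt hxt x' hx' a xs fun n hn => ⟨(hxs n hn).1, (hxs n hn).2.trans hr⟩

end BlockHitsBall

lemma exists_blockHitsBall {d b t : ℕ} (hb : 2 ≤ b) {u : ℕ → Fin d → ℝ} (hu : IsTSeq b t u)
    {κ : (Fin d → ℝ) → (Fin d → ℝ) → ℝ} {m M : ℝ} (hκ : DensityBounds κ m M)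
    {G : (Fin d → ℝ) → (Fin d → ℝ) → (Fin d → ℝ)} (hG : IsInvRos κ G) {δ : ℝ} (hδ : 0 < δ) :
    ∃ k, t + d ≤ k ∧ ∃ r > 0, BlockHitsBall b t u G δ k r := by
  obtain ⟨η, hη, hstable⟩ := hκ.exists_dist_invRos_le hG hδ
  obtain ⟨e, he⟩ := pow_unbounded_of_one_lt (1 / η) (by exact_mod_cast hb : (1 : ℝ) < b)
  have hbe : 1 / (b : ℝ) ^ (e + 1) ≤ η := by
    rw [div_le_iff₀ (by positivity), mul_comm, ← div_le_iff₀ hη]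
    exact he.le.trans (pow_le_pow_right₀ (by exact_mod_cast (by omega : 1 ≤ b)) e.le_succ)
  refine ⟨t + d * (e + 1), by nlinarith, η, hη, fun xt hxt x' hx' a xs hxs => ?_⟩
  refine (hu.le_card_filter_dist_le (by omega) (hκ.Ros_mem_cube hxt hx') (e + 1) a).trans
    (Finset.card_le_card fun n hn => ?_)
  rw [Finset.mem_filter] at hn ⊢
  obtain ⟨hxn, hdxn⟩ := hxs n hn.1
  have hun : ∀ i, u n i ∈ Icc (0 : ℝ) 1 := fun i => Ico_subset_Icc_self (hu.1 n i)
  refine ⟨hn.1, (hG _ hxn _ hun).1, ?_⟩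
  rw [← dist_eq_norm] at hdxn ⊢
  exact hstable xt hxt x' hx' _ hxn _ hun hdxn (hn.2.trans hbe)

lemma exists_antitone_pos_le (r : ℕ → ℝ) (hr : ∀ n, 0 < r n) :
    ∃ s : ℕ → ℝ, Antitone s ∧ (∀ n, 0 < s n) ∧ ∀ n, s n ≤ r n :=
  ⟨fun n => (Finset.range (n + 1)).inf' Finset.nonempty_range_add_one r,
    fun _ _ h => Finset.inf'_mono _ (Finset.range_subset_range.2 (by omega)) _,
    fun n => (Finset.lt_inf'_iff _).2 fun i _ => hr i,
    fun n => Finset.inf'_le _ (Finset.self_mem_range_succ n)⟩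

lemma strictMonoOn_primitive {h : ℝ → ℝ} (hm : Monotone h) (hpos : ∀ s, 0 < s → 0 < h s) :
    StrictMonoOn (fun x => ∫ s in (0 : ℝ)..x, h s) (Ici 0) := fun p hp q _ hpq => by
  have hint : ∀ a b : ℝ, IntervalIntegrable h volume a b := fun _ _ => hm.intervalIntegrable
  simp only
  rw [← sub_pos, intervalIntegral.integral_interval_sub_left (hint 0 q) (hint 0 p)]
  exact intervalIntegral.intervalIntegral_pos_of_pos_on (hint p q)
    (fun s hs => hpos s ((mem_Ici.1 hp).trans_lt hs.1)) hpq

lemma primitive_le_mul {h : ℝ → ℝ} (hm : Monotone h) {x : ℝ} (hx : 0 ≤ x) :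
    ∫ s in (0 : ℝ)..x, h s ≤ x * h x := by
  have := intervalIntegral.integral_mono_on hx (hm.intervalIntegrable (μ := volume))
    intervalIntegrable_const fun s hs => hm hs.2
  rwa [intervalIntegral.integral_const, smul_eq_mul, sub_zero] at this

lemma exists_continuous_strictMonoOn_radius (K₀ : ℕ) (P : ℝ → ℕ → ℝ → Prop)
    (hP : ∀ δ > 0, ∃ k, K₀ ≤ k ∧ ∃ r > 0, P δ k r)
    (hPδ : ∀ {δ δ' k r}, P δ k r → δ ≤ δ' → P δ' k r)
    (hPr : ∀ {δ k r r'}, P δ k r → r' ≤ r → P δ k r') :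
    ∃ kδ : ℝ → ℕ, ∃ v : ℝ → ℝ, (∀ δ ∈ Ioc (0 : ℝ) 1, K₀ ≤ kδ δ) ∧
      ContinuousOn v (Ioc 0 1) ∧ StrictMonoOn v (Ioc 0 1) ∧ (∀ δ ∈ Ioc (0 : ℝ) 1, 0 < v δ) ∧
      Tendsto v (nhdsWithin 0 (Ioi 0)) (nhds 0) ∧ ∀ δ ∈ Ioc (0 : ℝ) 1, P δ (kδ δ) (v δ) := by
  choose k hk r hr hPkr using fun n : ℕ => hP (1 / (n + 1)) (by positivity)
  obtain ⟨s, hs_anti, hs_pos, hs_le⟩ := exists_antitone_pos_le r hr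
  -- `δ ∈ (1 / (N δ + 1), 1 / N δ]`
  set N : ℝ → ℕ := fun δ => ⌊1 / δ⌋₊
  set h : ℝ → ℝ := fun δ => if 0 < δ then s (N δ) else 0
  have hpos : ∀ δ, 0 < δ → 0 < h δ := fun δ hδ => by simp [h, hδ, hs_pos]
  have hm : Monotone h := fun δ δ' hδδ' => by
    by_cases hδ : 0 < δ
    · simp only [h, hδ, hδ.trans_le hδδ', if_true]
      exact hs_anti (Nat.floor_le_floor (one_div_le_one_div_of_le hδ hδδ'))
    · simp only [h, hδ, if_false]
      split_ifs
      exacts [(hs_pos _).le, le_rfl]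
  set v : ℝ → ℝ := fun x => ∫ s in (0 : ℝ)..x, h s
  have hcont : Continuous v :=
    intervalIntegral.continuous_primitive (fun _ _ => hm.intervalIntegrable) 0
  have hv0 : v 0 = 0 := intervalIntegral.integral_same
  have hmono := strictMonoOn_primitive hm hpos
  refine ⟨fun δ => k (N δ), v, fun δ _ => hk _, hcont.continuousOn,
    hmono.mono fun _ hδ => mem_Ici.2 hδ.1.le,
    fun δ hδ => hv0 ▸ hmono (mem_Ici.2 le_rfl) (mem_Ici.2 hδ.1.le) hδ.1, ?_, fun δ hδ => ?_⟩
  · exact (hv0 ▸ hcont.tendsto 0).mono_left nhdsWithin_le_nhds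
  · have hδN : 1 / ((N δ : ℝ) + 1) ≤ δ := by
      rw [div_le_iff₀ (by positivity), ← div_le_iff₀' hδ.1]
      exact (Nat.lt_floor_add_one _).le
    refine hPr (hPδ (hPkr (N δ)) hδN) ?_
    calc v δ ≤ δ * h δ := primitive_le_mul hm hδ.1.le
      _ ≤ h δ := mul_le_of_le_one_left (hpos δ hδ.1).le hδ.2
      _ = s (N δ) := if_pos hδ.1
      _ ≤ r (N δ) := hs_le _

theorem invRos_block_hits_ball_general
    {d b t : ℕ} (hb : 2 ≤ b)
    (u : ℕ → Fin d → ℝ) (hu : IsTSeq b t u)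
    (κ : (Fin d → ℝ) → (Fin d → ℝ) → ℝ)
    (Klow : ℝ) (hA2 : A2 κ Klow)
    (G : (Fin d → ℝ) → (Fin d → ℝ) → (Fin d → ℝ)) (hG : IsInvRos κ G) :
    ∃ δbar : ℝ, 0 < δbar ∧ ∃ kδ : ℝ → ℕ, ∃ vK : ℝ → ℝ,
      (∀ δ ∈ Set.Ioc (0:ℝ) δbar, t + d ≤ kδ δ) ∧
      ContinuousOn vK (Set.Ioc 0 δbar) ∧ StrictMonoOn vK (Set.Ioc 0 δbar) ∧
      (∀ δ ∈ Set.Ioc (0:ℝ) δbar, 0 < vK δ) ∧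
      Tendsto vK (nhdsWithin 0 (Set.Ioi 0)) (nhds 0) ∧
      ∀ δ ∈ Set.Ioc (0:ℝ) δbar, ∀ xt ∈ cube d, ∀ x' ∈ cube d, ∀ a : ℕ,
        ∀ xs : ℕ → Fin d → ℝ,
          (∀ n ∈ Finset.Ico (a * b ^ kδ δ) (a * b ^ kδ δ + b ^ kδ δ),
            xs n ∈ ball' (vK δ) xt) →
          b ^ t ≤ ((Finset.Ico (a * b ^ kδ δ) (a * b ^ kδ δ + b ^ kδ δ)).filter
            (fun n => G (xs n) (u n) ∈ ball' δ x')).card := by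
  obtain ⟨M, hκ⟩ := hA2.exists_densityBounds
  obtain ⟨kδ, vK, hk, hcont, hmono, hpos, hlim, hhit⟩ :=
    exists_continuous_strictMonoOn_radius (t + d) (BlockHitsBall b t u G)
      (fun _ hδ => exists_blockHitsBall hb hu hκ hG hδ) BlockHitsBall.mono_left
      BlockHitsBall.anti_right
  exact ⟨1, one_pos, kδ, vK, hk, hcont, hmono, hpos, hlim, hhit⟩

/-- **Lemma 1.** Under (A1)-(A2), there exist `δ̄_K > 0`, `k_δ ≥ t + d` and a continuous,
strictly increasing `v_K` with `v_K(δ) → 0` (all independent of `(x̃, x')`), such that for all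
`δ ∈ (0, δ̄_K]`, every block `{F_K^{-1}(x^n, u^n) : a b^{k_δ} ≤ n < (a+1) b^{k_δ}}` with
`x^n ∈ B_{v_K(δ)}(x̃)` contains at least `b^t` points in `B_δ(x')`. -/
theorem invRos_block_hits_ball
    {d b t : ℕ} (hd : 0 < d) (hb : 2 ≤ b)
    (u : ℕ → Fin d → ℝ) (hu : IsTSeq b t u)
    (κ : (Fin d → ℝ) → (Fin d → ℝ) → ℝ) (hκ : IsMarkovDensity κ)
    (hA1 : A1 κ) (Klow : ℝ) (hA2 : A2 κ Klow)
    (G : (Fin d → ℝ) → (Fin d → ℝ) → (Fin d → ℝ)) (hG : IsInvRos κ G) :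
    ∃ δbar : ℝ, 0 < δbar ∧ ∃ kδ : ℝ → ℕ, ∃ vK : ℝ → ℝ,
      (∀ δ ∈ Set.Ioc (0:ℝ) δbar, t + d ≤ kδ δ) ∧
      ContinuousOn vK (Set.Ioc 0 δbar) ∧ StrictMonoOn vK (Set.Ioc 0 δbar) ∧
      (∀ δ ∈ Set.Ioc (0:ℝ) δbar, 0 < vK δ) ∧
      Tendsto vK (nhdsWithin 0 (Set.Ioi 0)) (nhds 0) ∧
      ∀ δ ∈ Set.Ioc (0:ℝ) δbar, ∀ xt ∈ cube d, ∀ x' ∈ cube d, ∀ a : ℕ,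
        ∀ xs : ℕ → Fin d → ℝ,
          (∀ n ∈ Finset.Ico (a * b ^ kδ δ) (a * b ^ kδ δ + b ^ kδ δ),
            xs n ∈ ball' (vK δ) xt) →
          b ^ t ≤ ((Finset.Ico (a * b ^ kδ δ) (a * b ^ kδ δ + b ^ kδ δ)).filter
            (fun n => G (xs n) (u n) ∈ ball' δ x')).card :=
  invRos_block_hits_ball_general hb u hu κ Klow hA2 G hG
end

section
/- Let X ⊆ ℝ^d, φ : X → ℝ, (T_n)_{n≥1} positive reals, and let (x^n)_{n≥0} and (y^n)_{n≥1} be sequences in X satisfying the Metropolis update x^n = y^n if v^n ≤ exp((φ(y^n) − φ(x^{n−1}))/T_n) and x^n = x^{n−1} otherwise, where (v^n)_{n≥0} is a (0,1)-sequence in base b ≥ 2 with v^0 = 0. Then, for every n ≥ 1, if φ(y^n) < φ(x^{n−1}) − T_n k_n log b then x^n = x^{n−1} (the candidate y^n is rejected), where k_n is the smallest integer k with n < b^k. -/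
/-!
Since `v^0 = 0` and the first `b^k` points of a `(0,1)`-sequence form a `(0,k,1)`-net, the box
`[0, b^{-k})` contains no point `v^n` with `0 < n < b^k`; hence `v^n ≥ b^{-k_n}`. Below the
threshold the acceptance probability `exp((φ(y^n) - φ(x^{n-1}))/T_n)` is `< b^{-k_n}`.
-/

open MeasureTheory ProbabilityTheory Set Filter
open scoped Classical

lemma lt_pow_kOf {b : ℕ} (hb : 1 < b) (n : ℕ) : n < b ^ kOf b n :=
  Nat.sInf_mem (⟨n, Nat.lt_pow_self hb⟩ : {k | n < b ^ k}.Nonempty)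

lemma IsTSeq1.inv_pow_le_of_lt_pow {b : ℕ} {v : ℕ → ℝ} (hv : IsTSeq1 b 0 v) (hv0 : v 0 = 0)
    {n m : ℕ} (hn0 : n ≠ 0) (hnm : n < b ^ m) : ((b : ℝ) ^ m)⁻¹ ≤ v n := by
  by_contra! hlt
  have hpow : (0 : ℝ) < (b : ℝ) ^ m := by exact_mod_cast (Nat.zero_le n).trans_lt hnm
  have hcard := hv.2 0 m m.zero_le 0 (by rw [Nat.sub_zero]; omega)
  simp only [zero_mul, zero_add, Nat.sub_zero, Nat.cast_zero, zero_div, one_div, pow_zero]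
    at hcard
  have hsub : ({0, n} : Finset ℕ) ⊆
      (Finset.Ico 0 (b ^ m)).filter (fun k => 0 ≤ v k ∧ v k < ((b : ℝ) ^ m)⁻¹) := by
    intro k hk
    simp only [Finset.mem_insert, Finset.mem_singleton] at hk
    rcases hk with rfl | rfl
    · simp only [Finset.mem_filter, Finset.mem_Ico, hv0]
      exact ⟨⟨le_rfl, by omega⟩, le_rfl, inv_pos.mpr hpow⟩
    · simp only [Finset.mem_filter, Finset.mem_Ico]
      exact ⟨⟨Nat.zero_le _, hnm⟩, (hv.1 k).1, hlt⟩
  have := Finset.card_le_card hsub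
  rw [hcard, Finset.card_pair hn0.symm] at this
  omega

lemma exp_div_lt_inv_pow {a c T b : ℝ} (hT : 0 < T) (hb : 0 < b) (k : ℕ)
    (h : a < c - T * k * Real.log b) : Real.exp ((a - c) / T) < (b ^ k)⁻¹ := by
  have harg : (a - c) / T < -(k * Real.log b) := by
    rw [div_lt_iff₀ hT]
    linarith
  calc Real.exp ((a - c) / T) < Real.exp (-(k * Real.log b)) := Real.exp_lt_exp.mpr harg
    _ = (b ^ k)⁻¹ := by rw [Real.exp_neg, Real.exp_nat_mul, Real.exp_log hb]

theorem candidate_rejected_below_threshold_general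
    {d b : ℕ} (hb : 2 ≤ b)
    (φ : (Fin d → ℝ) → ℝ) (T : ℕ → ℝ) (hT_pos : ∀ n, 0 < T n)
    (v : ℕ → ℝ) (hv : IsTSeq1 b 0 v) (hv0 : v 0 = 0)
    (x y : ℕ → Fin d → ℝ)
    (hupd : ∀ n : ℕ, x (n + 1) =
      if v (n + 1) ≤ Real.exp ((φ (y (n + 1)) - φ (x n)) / T (n + 1))
      then y (n + 1) else x n) :
    ∀ n : ℕ, φ (y (n + 1)) < φ (x n) - T (n + 1) * (kOf b (n + 1)) * Real.log b →
      x (n + 1) = x n := by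
  intro n hφ
  have hv_ge : ((b : ℝ) ^ kOf b (n + 1))⁻¹ ≤ v (n + 1) :=
    hv.inv_pow_le_of_lt_pow hv0 n.succ_ne_zero (lt_pow_kOf (by omega) (n + 1))
  have hexp_lt := exp_div_lt_inv_pow (hT_pos (n + 1)) (by positivity) _ hφ
  rw [hupd n, if_neg (not_le.mpr (hexp_lt.trans_le hv_ge))]

/-- **Lemma 4 (automatic rejection).** In the Metropolis step driven by a `(0,1)`-sequence
`(v^n)` in base `b` with `v^0 = 0`, the candidate `y^n` is rejected as soon as
`φ(y^n) < φ(x^{n-1}) - T_n k_n log b`, where `k_n` is the smallest `k` with `n < b^k`. -/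
theorem candidate_rejected_below_threshold
    {d b : ℕ} (hb : 2 ≤ b) (X : Set (Fin d → ℝ))
    (φ : (Fin d → ℝ) → ℝ) (T : ℕ → ℝ) (hT_pos : ∀ n, 0 < T n)
    (v : ℕ → ℝ) (hv : IsTSeq1 b 0 v) (hv0 : v 0 = 0)
    (x y : ℕ → Fin d → ℝ) (hxX : ∀ n, x n ∈ X) (hyX : ∀ n, 1 ≤ n → y n ∈ X)
    (hupd : ∀ n : ℕ, x (n + 1) =
      if v (n + 1) ≤ Real.exp ((φ (y (n + 1)) - φ (x n)) / T (n + 1))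
      then y (n + 1) else x n) :
    ∀ n : ℕ, φ (y (n + 1)) < φ (x n) - T (n + 1) * (kOf b (n + 1)) * Real.log b →
      x (n + 1) = x n :=
  candidate_rejected_below_threshold_general hb φ T hT_pos v hv hv0 x y hupd
end
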